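/- arXiv:2402.14773 — 3 statements merged into one kernel-verified Lean document; each statement's English description precedes it below -/
import Mathlib

section
/- In dimension d = 3, for four positive frequencies ω_0, ω_1, ω_2, ω_3, the interaction integral I(ω_0, ω_1, ω_2, ω_3) = 4π ∫_0^∞ q² ∏_{j=0}^3 (sin(√ω_j q)/(√ω_j q)) dq converges (as an improper integral) and is nonnegative whenever √ω_0 is the largest of the √ω_j and √ω_0 ≤ √ω_1 + √ω_2 + √ω_3. -/
/-!
Writing `a j = √ω_j`, the product-to-sum formula expresses `q² ∏ sin(a_j q)/(a_j q)` as
`-π/(2 ∏ a_j)` times the third central difference `δ_{a₁} δ_{a₂} δ_{a₃}`, taken at `a₀`, of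
`t ↦ (1 - cos (t q)) / q²`. This kernel is integrable in `q`, and by scaling its integral is
`|t| · J` with `J ≥ 0`. Hence the integral converges and equals `-π J/(2 ∏ a_j)` times the third
central difference of `|·|`, which is `≤ 0` when `a₁, a₂, a₃ ≤ a₀ ≤ a₁ + a₂ + a₃`.
-/

open MeasureTheory Real Filter Set

def centralDiff (h : ℝ) (F : ℝ → ℝ) (x : ℝ) : ℝ := F (x + h) - F (x - h)

lemma centralDiff_mul_const (h c : ℝ) (F : ℝ → ℝ) :
    centralDiff h (fun t => F t * c) = fun x => centralDiff h F x * c := by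
  ext x; simp only [centralDiff, sub_mul]

lemma integrable_centralDiff_and_integral_eq {α : Type*} [MeasurableSpace α] {μ : Measure α}
    {G : ℝ → α → ℝ} {K : ℝ → ℝ} (hG : ∀ t, Integrable (G t) μ ∧ ∫ q, G t q ∂μ = K t) (h t : ℝ) :
    Integrable (fun q => centralDiff h (G · q) t) μ ∧
      ∫ q, centralDiff h (G · q) t ∂μ = centralDiff h K t :=
  ⟨(hG _).1.sub (hG _).1, by
    rw [centralDiff, ← (hG _).2, ← (hG _).2]
    exact integral_sub (hG _).1 (hG _).1⟩

lemma centralDiff_three_abs_nonpos {a b c d : ℝ} (hb : 0 ≤ b) (hc : 0 ≤ c) (hd : 0 ≤ d)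
    (hba : b ≤ a) (hca : c ≤ a) (hda : d ≤ a) (habcd : a ≤ b + c + d) :
    centralDiff b (centralDiff c (centralDiff d abs)) a ≤ 0 := by
  simp only [centralDiff]
  rw [abs_of_nonneg (by linarith : 0 ≤ a + b + c + d),
    abs_of_nonpos (by linarith : a - b - c - d ≤ 0),
    abs_of_nonneg (by linarith : 0 ≤ a + b + c - d),
    abs_of_nonneg (by linarith : 0 ≤ a + b - c + d),
    abs_of_nonneg (by linarith : 0 ≤ a - b + c + d)]
  rcases abs_cases (a + b - c - d) with ⟨h₁, -⟩ | ⟨h₁, -⟩ <;>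
  rcases abs_cases (a - b + c - d) with ⟨h₂, -⟩ | ⟨h₂, -⟩ <;>
  rcases abs_cases (a - b - c + d) with ⟨h₃, -⟩ | ⟨h₃, -⟩ <;>
  linarith

noncomputable def oneSubCosDivSq (t q : ℝ) : ℝ := (1 - cos (t * q)) / q ^ 2

lemma oneSubCosDivSq_nonneg (t q : ℝ) : 0 ≤ oneSubCosDivSq t q :=
  div_nonneg (sub_nonneg.2 (cos_le_one _)) (sq_nonneg q)

lemma oneSubCosDivSq_le (t q : ℝ) :
    oneSubCosDivSq t q ≤ (t ^ 2 / 2 + 2) * (1 + q ^ 2)⁻¹ := by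
  rcases eq_or_ne q 0 with rfl | hq
  · simp [oneSubCosDivSq]; positivity
  have h₁ : oneSubCosDivSq t q ≤ t ^ 2 / 2 := by
    rw [oneSubCosDivSq, div_le_iff₀ (by positivity)]
    nlinarith [one_sub_sq_div_two_le_cos (x := t * q)]
  have h₂ : q ^ 2 * oneSubCosDivSq t q ≤ 2 := by
    rw [oneSubCosDivSq, mul_div_cancel₀ _ (by positivity)]
    linarith [neg_one_le_cos (t * q)]
  rw [← div_eq_mul_inv, le_div_iff₀ (by positivity)]
  linarith

lemma integrable_oneSubCosDivSq (t : ℝ) : Integrable (oneSubCosDivSq t) := by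
  refine (integrable_inv_one_add_sq.const_mul (t ^ 2 / 2 + 2)).mono' ?_ ?_
  · exact (by unfold oneSubCosDivSq; fun_prop : Measurable _).aestronglyMeasurable
  · refine ae_of_all _ fun q => ?_
    rw [norm_of_nonneg (oneSubCosDivSq_nonneg t q)]
    exact oneSubCosDivSq_le t q

lemma integral_oneSubCosDivSq (t : ℝ) :
    ∫ q in Ioi 0, oneSubCosDivSq t q = |t| * ∫ q in Ioi 0, oneSubCosDivSq 1 q := by
  wlog ht : 0 < t generalizing t with H
  · rcases (not_lt.1 ht).lt_or_eq with ht | rfl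
    · have : oneSubCosDivSq t = oneSubCosDivSq (-t) := by
        ext q; simp [oneSubCosDivSq, neg_mul, cos_neg]
      rw [this, H (-t) (neg_pos.2 ht), abs_neg]
    · simp [oneSubCosDivSq]
  have hscale : ∀ q, oneSubCosDivSq t q = t ^ 2 * oneSubCosDivSq 1 (t * q) := by
    intro q
    rcases eq_or_ne q 0 with rfl | hq
    · simp [oneSubCosDivSq]
    simp only [oneSubCosDivSq, one_mul]
    field_simp
  simp_rw [hscale, integral_const_mul, integral_comp_mul_left_Ioi (oneSubCosDivSq 1) 0 ht,
    mul_zero, smul_eq_mul, abs_of_pos ht]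
  field_simp

lemma centralDiff_three_oneSubCosDivSq (a b c d q : ℝ) :
    centralDiff b (centralDiff c (centralDiff d (oneSubCosDivSq · q))) a =
      -8 * sin (a * q) * sin (b * q) * sin (c * q) * sin (d * q) / q ^ 2 := by
  simp only [centralDiff, oneSubCosDivSq, add_mul, sub_mul, cos_add, cos_sub, sin_add, sin_sub]
  ring

lemma interaction_integrand_eq (a : Fin 4 → ℝ) (ha : ∀ j, a j ≠ 0) (q : ℝ) :
    4 * π * q ^ 2 * ∏ j, sin (a j * q) / (a j * q) =
      -(π / (2 * ∏ j, a j)) *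
        centralDiff (a 1) (centralDiff (a 2) (centralDiff (a 3) (oneSubCosDivSq · q))) (a 0) := by
  -- at `q = 0` both sides are `0`, through the convention `x / 0 = 0`
  rcases eq_or_ne q 0 with rfl | hq
  · simp [centralDiff, oneSubCosDivSq]
  rw [centralDiff_three_oneSubCosDivSq, Fin.prod_univ_four, Fin.prod_univ_four]
  field_simp [ha 0, ha 1, ha 2, ha 3]
  ring

/-- in `d = 3`, the interaction integral
`I(ω_0,ω_1,ω_2,ω_3) = 4π ∫_0^∞ q² ∏_j sin(√ω_j q)/(√ω_j q) dq` converges as an improper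
integral and is nonnegative when `√ω_0` is the largest and `√ω_0 ≤ √ω_1 + √ω_2 + √ω_3`. -/
theorem interaction_integral_d3_converges_nonneg (ω : Fin 4 → ℝ)
    (hω : ∀ j, 0 < ω j)
    (hmax : ∀ j, Real.sqrt (ω j) ≤ Real.sqrt (ω 0))
    (htri : Real.sqrt (ω 0) ≤ Real.sqrt (ω 1) + Real.sqrt (ω 2) + Real.sqrt (ω 3)) :
    ∃ I : ℝ,
      Tendsto (fun R : ℝ => ∫ q in (0 : ℝ)..R,
          4 * π * q ^ 2 * ∏ j, Real.sin (Real.sqrt (ω j) * q) / (Real.sqrt (ω j) * q))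
        atTop (nhds I) ∧ 0 ≤ I := by
  have ha : ∀ j, 0 < √(ω j) := fun j => sqrt_pos.2 (hω j)
  obtain ⟨hint, hval⟩ := integrable_centralDiff_and_integral_eq
    (integrable_centralDiff_and_integral_eq (integrable_centralDiff_and_integral_eq
      (fun t => ⟨(integrable_oneSubCosDivSq t).integrableOn, integral_oneSubCosDivSq t⟩)
      √(ω 3)) √(ω 2)) √(ω 1) √(ω 0)
  rw [funext (interaction_integrand_eq (fun j => √(ω j)) fun j => (ha j).ne')]
  refine ⟨_, intervalIntegral_tendsto_integral_Ioi 0 (hint.const_mul _) tendsto_id, ?_⟩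
  have hdiff : centralDiff √(ω 1) (centralDiff √(ω 2) (centralDiff √(ω 3) abs)) √(ω 0) ≤ 0 :=
    centralDiff_three_abs_nonpos (ha 1).le (ha 2).le (ha 3).le (hmax 1) (hmax 2) (hmax 3) htri
  have hJ : 0 ≤ ∫ q in Ioi 0, oneSubCosDivSq 1 q :=
    setIntegral_nonneg measurableSet_Ioi fun q _ => oneSubCosDivSq_nonneg 1 q
  have hc : 0 < π / (2 * ∏ j, √(ω j)) := by
    have hprod := Finset.prod_pos fun j (_ : j ∈ Finset.univ) => ha j
    positivity
  rw [integral_const_mul, hval]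
  simp only [centralDiff_mul_const]
  exact mul_nonneg_of_nonpos_of_nonpos (neg_nonpos.2 hc.le) (mul_nonpos_of_nonpos_of_nonneg hdiff hJ)
end

section
/- For a function χ ∈ C_c(ℝ_+) and a sequence λ_n ~ 4π(C n)^{2/d} (n → ∞) with C > 0, the Riemann-sum limit holds: L^{-d} Σ_n χ(λ_n/L²) → (d/(2C(4π)^{d/2})) ∫_0^∞ ω^{d/2−1} χ(ω) dω as L → ∞. -/
/-
Write `λ_n = A ξ_n ^ (2/d)` with `A = 4π C^(2/d)`: the asymptotics of `λ_n` say exactly that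
`ξ_n / n → 1`. With `T = L^d` and `f t = χ (A t^(2/d))` we get `χ (λ_n / L²) = f (ξ_n / T)`, so
`L^(-d) ∑ χ(λ_n/L²)` is the Riemann sum `T⁻¹ ∑ f (ξ_n / T)` of `f` over the nodes `ξ_n / T`, which
are asymptotically equally spaced with mesh `1/T`. Since `f` is continuous with compact support
this converges to `∫₀^∞ f`, and the substitution `ω = A t^(2/d)` turns that integral into the
stated one.
-/

open MeasureTheory Real Filter Set Topology

theorem abs_mul_sub_intervalIntegral_le {f : ℝ → ℝ} (hf : Continuous f) {a h η : ℝ} (hh : 0 ≤ h)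
    (hη : ∀ t ∈ Icc a (a + h), |f a - f t| ≤ η) :
    |f a * h - ∫ t in a..a + h, f t| ≤ h * η := by
  have hconst : f a * h = ∫ _ in a..a + h, f a := by simp [mul_comm]
  rw [hconst, ← intervalIntegral.integral_sub intervalIntegrable_const (hf.intervalIntegrable _ _)]
  have hbound := intervalIntegral.norm_integral_le_of_norm_le_const (a := a) (b := a + h)
    (f := fun t => f a - f t) (C := η) fun t ht => by
      rw [uIoc_of_le (le_add_of_nonneg_right hh)] at ht
      exact hη t (Ioc_subset_Icc_self ht)
  rwa [Real.norm_eq_abs, add_sub_cancel_left, abs_of_nonneg hh, mul_comm] at hbound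

theorem abs_sum_mul_sub_intervalIntegral_le {f : ℝ → ℝ} (hf : Continuous f) {h η : ℝ} (hh : 0 ≤ h)
    (hη : ∀ s t, |s - t| ≤ h → |f s - f t| ≤ η) (M : ℕ) :
    |∑ n ∈ Finset.range M, f (n * h) * h - ∫ t in (0 : ℝ)..M * h, f t| ≤ M * h * η := by
  have hsplit := intervalIntegral.sum_integral_adjacent_intervals (a := fun k : ℕ => k * h)
    (n := M) (μ := volume) (fun k _ => hf.intervalIntegrable _ _)
  simp only [Nat.cast_zero, zero_mul, Nat.cast_succ, add_mul, one_mul] at hsplit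
  rw [← hsplit, ← Finset.sum_sub_distrib]
  calc _ ≤ ∑ n ∈ Finset.range M, |f (n * h) * h - ∫ t in n * h..n * h + h, f t| :=
        Finset.abs_sum_le_sum_abs _ _
    _ ≤ ∑ _n ∈ Finset.range M, h * η := Finset.sum_le_sum fun n _ =>
        abs_mul_sub_intervalIntegral_le hf hh fun t ht =>
          hη _ _ (by rw [abs_sub_comm, abs_of_nonneg (by linarith [ht.1])]; linarith [ht.2])
    _ = M * h * η := by simp [mul_assoc]

theorem tendsto_tsum_div_atTop_setIntegral_Ioi {f : ℝ → ℝ} (hf : Continuous f)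
    (hfs : HasCompactSupport f) :
    Tendsto (fun T : ℝ => (∑' n : ℕ, f (n / T)) / T) atTop (𝓝 (∫ t in Ioi 0, f t)) := by
  obtain ⟨R, hR, hfR⟩ := hfs.exists_pos_le_norm
  rw [Metric.tendsto_atTop]
  intro ε hε
  set η := ε / (2 * (R + 1))
  obtain ⟨δ, hδ, hfδ⟩ := Metric.uniformContinuous_iff.mp (hfs.uniformContinuous_of_continuous hf)
    η (by positivity)
  refine ⟨max 1 (2 / δ), fun T hT => ?_⟩
  have hT1 : 1 ≤ T := le_of_max_le_left hT
  have hT0 : 0 < T := one_pos.trans_le hT1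
  have hTδ : 1 / T < δ := by
    rw [div_lt_iff₀ hT0]
    have := (div_le_iff₀ hδ).mp (le_of_max_le_right hT)
    linarith
  set M := ⌈R * T⌉₊
  have hRM : R ≤ M * (1 / T) := by
    rw [mul_one_div, le_div_iff₀ hT0]; exact Nat.le_ceil _
  have hsum : ∑' n : ℕ, f (n / T) = ∑ n ∈ Finset.range M, f (n / T) := by
    refine tsum_eq_sum fun n hn => hfR _ ?_
    have hMn : (M : ℝ) ≤ n := Nat.cast_le.mpr (not_lt.mp (Finset.mem_range.not.mp hn))
    rw [Real.norm_eq_abs, abs_of_nonneg (by positivity), le_div_iff₀ hT0]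
    exact (Nat.le_ceil _).trans hMn
  have hint : ∫ t in Ioi 0, f t = ∫ t in (0 : ℝ)..M * (1 / T), f t := by
    rw [intervalIntegral.integral_of_le (by positivity)]
    refine setIntegral_eq_of_subset_of_forall_sdiff_eq_zero measurableSet_Ioi Ioc_subset_Ioi_self
      fun t ht => hfR t ?_
    have hMt : M * (1 / T) < t := not_le.mp fun h => ht.2 ⟨ht.1, h⟩
    rw [Real.norm_eq_abs, abs_of_pos ht.1]
    linarith
  have hgrid := abs_sum_mul_sub_intervalIntegral_le hf (by positivity)
    (fun s t hst => (hfδ (lt_of_le_of_lt hst hTδ)).le) M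
  rw [Real.dist_eq, hsum, hint, Finset.sum_div]
  calc |∑ n ∈ Finset.range M, f (n / T) / T - ∫ t in (0 : ℝ)..M * (1 / T), f t|
      ≤ M * (1 / T) * η := by simpa only [mul_one_div] using hgrid
    _ ≤ (R + 1) * η := by
        gcongr
        have : (M : ℝ) ≤ R * T + 1 := (Nat.ceil_lt_add_one (by positivity)).le
        rw [mul_one_div, div_le_iff₀ hT0]
        nlinarith
    _ < ε := by
        rw [show (R + 1) * η = ε / 2 by simp only [η]; field_simp]
        linarith

theorem eventually_abs_sub_le_mul_of_tendsto_div {ξ : ℕ → ℝ}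
    (hξ : Tendsto (fun n : ℕ => ξ n / n) atTop (𝓝 1)) {θ : ℝ} (hθ : 0 < θ) :
    ∀ᶠ n : ℕ in atTop, |ξ n - n| ≤ θ * n := by
  filter_upwards [Metric.tendsto_nhds.mp hξ θ hθ, eventually_gt_atTop 0] with n hclose hn
  have hn' : (0 : ℝ) < n := Nat.cast_pos.mpr hn
  rw [Real.dist_eq, div_sub_one hn'.ne', abs_div, abs_of_pos hn', div_lt_iff₀ hn'] at hclose
  exact hclose.le

section Perturbation

variable {f : ℝ → ℝ} {R δ η θ T x y : ℝ}

theorem comp_div_eq_zero_of_abs_sub_le (hfR : ∀ t, R ≤ ‖t‖ → f t = 0) (hR : 0 ≤ R) (hT : 0 < T)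
    (hxy : |x - y| ≤ y / 2) (hy : 2 * R * T ≤ y) : f (x / T) = 0 := by
  have hx : R * T ≤ x := by linarith [(abs_le.mp hxy).1]
  refine hfR _ ?_
  have hx₀ : 0 ≤ x := (by positivity : 0 ≤ R * T).trans hx
  rwa [Real.norm_eq_abs, abs_of_nonneg (div_nonneg hx₀ hT.le), le_div_iff₀ hT]

/-- Beyond `2RT` both points lie outside the support of `f`; below it they are `δ`-close. -/
theorem abs_comp_div_sub_comp_div_le (hfR : ∀ t, R ≤ ‖t‖ → f t = 0) (hR : 0 ≤ R)
    (hfδ : ∀ ⦃s t⦄, dist s t < δ → dist (f s) (f t) < η) (hθ₀ : 0 ≤ θ) (hθ : θ ≤ 1 / 2)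
    (hθδ : 2 * R * θ < δ) (hT : 0 < T) (hxy : |x - y| ≤ θ * y) :
    |f (x / T) - f (y / T)| ≤ η := by
  by_cases hy : 2 * R * T ≤ y
  · have hy₀ : 0 ≤ y := (by positivity : 0 ≤ 2 * R * T).trans hy
    have hxy' : |x - y| ≤ y / 2 := by nlinarith
    rw [comp_div_eq_zero_of_abs_sub_le hfR hR hT hxy' hy,
      comp_div_eq_zero_of_abs_sub_le hfR hR hT (by rw [sub_self, abs_zero]; linarith) hy,
      sub_zero, abs_zero]
    have hδ : dist (0 : ℝ) 0 < δ := by rw [dist_self]; nlinarith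
    exact dist_nonneg.trans (hfδ hδ).le
  · refine (hfδ ?_).le
    rw [Real.dist_eq, ← sub_div, abs_div, abs_of_pos hT, div_lt_iff₀ hT]
    calc |x - y| ≤ θ * y := hxy
      _ ≤ θ * (2 * R * T) := by gcongr; exact (not_le.mp hy).le
      _ < δ * T := by nlinarith

theorem abs_tsum_comp_div_sub_tsum_div_le {ξ : ℕ → ℝ} {B : ℝ} {N : ℕ}
    (hfR : ∀ t, R ≤ ‖t‖ → f t = 0) (hR : 0 ≤ R) (hfB : ∀ t, ‖f t‖ ≤ B)
    (hfδ : ∀ ⦃s t⦄, dist s t < δ → dist (f s) (f t) < η) (hθ₀ : 0 ≤ θ) (hθ : θ ≤ 1 / 2)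
    (hθδ : 2 * R * θ < δ) (hξ : ∀ n ≥ N, |ξ n - n| ≤ θ * n) (hT : 0 < T) :
    |∑' n, f (ξ n / T) - ∑' n : ℕ, f (n / T)| ≤ 2 * B * N + η * (N + 2 * R * T + 1) := by
  have hnear n (hn : N ≤ n) : |f (ξ n / T) - f (n / T)| ≤ η :=
    abs_comp_div_sub_comp_div_le hfR hR hfδ hθ₀ hθ hθδ hT (hξ n hn)
  set M := max N ⌈2 * R * T⌉₊
  have hfar n (hn : M ≤ n) : f (ξ n / T) = 0 ∧ f (n / T) = 0 := by
    have hNn : N ≤ n := le_of_max_le_left hn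
    have h2RT : 2 * R * T ≤ n := (Nat.le_ceil _).trans (Nat.cast_le.mpr (le_of_max_le_right hn))
    have hξn : |ξ n - n| ≤ n / 2 := by nlinarith [hξ n hNn, (n.cast_nonneg : (0 : ℝ) ≤ n)]
    exact ⟨comp_div_eq_zero_of_abs_sub_le hfR hR hT hξn h2RT,
      comp_div_eq_zero_of_abs_sub_le hfR hR hT (by simp; positivity) h2RT⟩
  have hsum {g : ℕ → ℝ} (hg : ∀ n ≥ M, g n = 0) : ∑' n, g n = ∑ n ∈ Finset.range M, g n :=
    tsum_eq_sum fun n hn => hg n (not_lt.mp (Finset.mem_range.not.mp hn))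
  rw [hsum fun n hn => (hfar n hn).1, hsum fun n hn => (hfar n hn).2, ← Finset.sum_sub_distrib,
    ← Finset.sum_range_add_sum_Ico _ (le_max_left N _)]
  have hη : 0 ≤ η := (abs_nonneg _).trans (hnear N le_rfl)
  have hMN : ((M - N : ℕ) : ℝ) ≤ 2 * R * T + 1 := by
    rw [Nat.cast_sub (le_max_left _ _), sub_le_iff_le_add']
    calc (M : ℝ) ≤ N + ⌈2 * R * T⌉₊ := by
          exact_mod_cast max_le (Nat.le_add_right _ _) (Nat.le_add_left _ _)
      _ ≤ N + (2 * R * T + 1) := by gcongr; exact (Nat.ceil_lt_add_one (by positivity)).le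
  calc _ ≤ |∑ n ∈ Finset.range N, (f (ξ n / T) - f (n / T))|
        + |∑ n ∈ Finset.Ico N M, (f (ξ n / T) - f (n / T))| := abs_add_le _ _
    _ ≤ ∑ _n ∈ Finset.range N, 2 * B + ∑ _n ∈ Finset.Ico N M, η := by
        gcongr
        · refine (Finset.abs_sum_le_sum_abs _ _).trans (Finset.sum_le_sum fun n _ => ?_)
          have h₁ := hfB (ξ n / T)
          have h₂ := hfB (n / T)
          rw [Real.norm_eq_abs] at h₁ h₂
          linarith [abs_sub (f (ξ n / T)) (f (n / T))]
        · exact (Finset.abs_sum_le_sum_abs _ _).trans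
            (Finset.sum_le_sum fun n hn => hnear n (Finset.mem_Ico.mp hn).1)
    _ = 2 * B * N + (M - N : ℕ) * η := by simp [mul_comm]
    _ ≤ 2 * B * N + η * (N + 2 * R * T + 1) := by nlinarith

end Perturbation

theorem tendsto_tsum_comp_div_sub_tsum_div {f : ℝ → ℝ} (hf : Continuous f)
    (hfs : HasCompactSupport f) {ξ : ℕ → ℝ} (hξ : Tendsto (fun n : ℕ => ξ n / n) atTop (𝓝 1)) :
    Tendsto (fun T : ℝ => (∑' n, f (ξ n / T) - ∑' n : ℕ, f (n / T)) / T) atTop (𝓝 0) := by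
  obtain ⟨R, hR, hfR⟩ := hfs.exists_pos_le_norm
  obtain ⟨B, hfB⟩ := hf.bounded_above_of_compact_support hfs
  rw [Metric.tendsto_atTop]
  intro ε hε
  set η := ε / (4 * (R + 1))
  obtain ⟨δ, hδ, hfδ⟩ := Metric.uniformContinuous_iff.mp (hfs.uniformContinuous_of_continuous hf)
    η (by positivity)
  set θ := min (1 / 2) (δ / (4 * R))
  have hθδ : 2 * R * θ < δ := by
    have : θ ≤ δ / (4 * R) := min_le_right _ _
    rw [le_div_iff₀ (by positivity)] at this
    nlinarith
  obtain ⟨N, hN⟩ := eventually_atTop.mp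
    (eventually_abs_sub_le_mul_of_tendsto_div hξ (θ := θ) (lt_min (by norm_num) (by positivity)))
  set K := 2 * B * N + η * (N + 1)
  have hK : 0 ≤ K := by
    have := (norm_nonneg _).trans (hfB 0)
    positivity
  refine ⟨2 * K / ε + 1, fun T hT => ?_⟩
  have hT0 : 0 < T := by linarith [(by positivity : 0 ≤ 2 * K / ε)]
  have hKT : K < ε / 2 * T := by
    have := (div_le_iff₀ hε).mp (le_sub_right_of_add_le hT)
    nlinarith
  have hηR : 2 * R * η < ε / 2 := by
    simp only [η]
    rw [← mul_div_assoc, div_lt_div_iff₀ (by positivity) (by norm_num)]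
    nlinarith
  rw [Real.dist_eq, sub_zero, abs_div, abs_of_pos hT0, div_lt_iff₀ hT0]
  calc _ ≤ 2 * B * N + η * (N + 2 * R * T + 1) :=
        abs_tsum_comp_div_sub_tsum_div_le hfR hR.le hfB hfδ (le_min (by norm_num) (by positivity))
          (min_le_left _ _) hθδ hN hT0
    _ = K + 2 * R * η * T := by ring
    _ < ε * T := by nlinarith

theorem tendsto_tsum_comp_div_atTop_setIntegral_Ioi {f : ℝ → ℝ} (hf : Continuous f)
    (hfs : HasCompactSupport f) {ξ : ℕ → ℝ} (hξ : Tendsto (fun n : ℕ => ξ n / n) atTop (𝓝 1)) :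
    Tendsto (fun T : ℝ => (∑' n, f (ξ n / T)) / T) atTop (𝓝 (∫ t in Ioi 0, f t)) := by
  have hsum := (tendsto_tsum_comp_div_sub_tsum_div hf hfs hξ).add
    (tendsto_tsum_div_atTop_setIntegral_Ioi hf hfs)
  rw [zero_add] at hsum
  exact hsum.congr fun T => by ring

theorem integral_comp_mul_abs_rpow_inv_Ioi (g : ℝ → ℝ) {A p : ℝ} (hA : 0 < A) (hp : 0 < p) :
    ∫ t in Ioi 0, g (A * |t| ^ p⁻¹) = p / A ^ p * ∫ ω in Ioi 0, ω ^ (p - 1) * g ω := by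
  have habs : ∫ t in Ioi 0, g (A * |t| ^ p⁻¹) = ∫ t in Ioi 0, g (A * t ^ p⁻¹) :=
    setIntegral_congr_fun measurableSet_Ioi fun t ht => by simp only [abs_of_pos (mem_Ioi.mp ht)]
  have hsubst := integral_comp_rpow_Ioi_of_pos (g := fun t => g (A * t ^ p⁻¹)) hp
  have hscale := integral_comp_mul_left_Ioi (fun ω => (ω / A) ^ (p - 1) * g ω) 0 hA
  rw [mul_zero] at hscale
  rw [habs, ← hsubst]
  calc ∫ x in Ioi 0, (p * x ^ (p - 1)) • g (A * (x ^ p) ^ p⁻¹)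
      = p * ∫ x in Ioi 0, (A * x / A) ^ (p - 1) * g (A * x) := by
        rw [← integral_const_mul]
        refine setIntegral_congr_fun measurableSet_Ioi fun x hx => ?_
        rw [smul_eq_mul, ← rpow_mul (le_of_lt hx), mul_inv_cancel₀ hp.ne', rpow_one,
          mul_div_cancel_left₀ _ hA.ne']
        ring
    _ = p / A ^ p * ∫ ω in Ioi 0, ω ^ (p - 1) * g ω := by
        rw [hscale, smul_eq_mul]
        have hdiv : ∫ ω in Ioi 0, (ω / A) ^ (p - 1) * g ω
            = (A ^ (p - 1))⁻¹ * ∫ ω in Ioi 0, ω ^ (p - 1) * g ω := by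
          rw [← integral_const_mul]
          refine setIntegral_congr_fun measurableSet_Ioi fun ω hω => ?_
          rw [div_rpow (le_of_lt hω) hA.le]
          ring
        rw [hdiv, rpow_sub_one hA.ne']
        field_simp

theorem HasCompactSupport.comp_mul_abs_rpow {χ : ℝ → ℝ} (hχ : HasCompactSupport χ) {A e : ℝ}
    (hA : 0 < A) (he : 0 < e) : HasCompactSupport fun t => χ (A * |t| ^ e) := by
  rw [hasCompactSupport_iff_eventuallyEq, coclosedCompact_eq_cocompact] at hχ ⊢
  have hgrowth : Tendsto (fun t : ℝ => A * |t| ^ e) (cocompact ℝ) atTop :=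
    ((tendsto_rpow_atTop he).comp tendsto_norm_cocompact_atTop).const_mul_atTop hA
  exact hgrowth.eventually (hχ.filter_mono atTop_le_cocompact)

theorem tendsto_rpow_inv_div_natCast {lam : ℕ → ℝ} {A e : ℝ} (hA : 0 < A) (he : 0 < e)
    (hlam : ∀ n, 0 ≤ lam n) (h : Tendsto (fun n : ℕ => lam n / (A * n ^ e)) atTop (𝓝 1)) :
    Tendsto (fun n : ℕ => (lam n / A) ^ e⁻¹ / n) atTop (𝓝 1) := by
  have hroot := h.rpow_const (p := e⁻¹) (Or.inr (inv_nonneg.mpr he.le))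
  rw [one_rpow] at hroot
  refine hroot.congr' ?_
  filter_upwards [eventually_gt_atTop 0] with n hn
  have hn' : (0 : ℝ) < n := Nat.cast_pos.mpr hn
  rw [← div_div, div_rpow (div_nonneg (hlam n) hA.le) (rpow_nonneg hn'.le _),
    rpow_rpow_inv hn'.le he.ne']

theorem mul_abs_div_pow_rpow_inv {A p μ L : ℝ} {d : ℕ} (hA : 0 < A) (hp : 0 < p)
    (hdp : d * p⁻¹ = 2) (hμ : 0 ≤ μ) (hL : 0 < L) :
    A * |(μ / A) ^ p / L ^ d| ^ p⁻¹ = μ / L ^ 2 := by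
  have hμA : 0 ≤ μ / A := div_nonneg hμ hA.le
  have hLd : (L ^ d) ^ p⁻¹ = L ^ 2 := by
    rw [← rpow_natCast, ← rpow_mul hL.le, hdp, rpow_two]
  rw [abs_of_nonneg (by positivity), div_rpow (by positivity) (by positivity), hLd,
    ← rpow_mul hμA, mul_inv_cancel₀ hp.ne', rpow_one, mul_div_assoc', mul_div_cancel₀ _ hA.ne']

theorem riemann_sum_limit_general (d : ℕ) (hd : 1 ≤ d) (C : ℝ) (hC : 0 < C)
    (χ : ℝ → ℝ) (hχc : Continuous χ) (hχs : HasCompactSupport χ)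
    (lam : ℕ → ℝ) (hlam0 : ∀ n, 0 ≤ lam n)
    (hasymp : Tendsto (fun n : ℕ => lam n / (4 * π * (C * n) ^ (2 / (d : ℝ))))
      atTop (nhds 1)) :
    Tendsto (fun L : ℝ => (∑' n : ℕ, χ (lam n / L ^ 2)) / L ^ d)
      atTop (nhds (((d : ℝ) / (2 * C * (4 * π) ^ ((d : ℝ) / 2))) *
        ∫ ω in Set.Ioi (0 : ℝ), ω ^ ((d : ℝ) / 2 - 1) * χ ω)) := by
  have hd₀ : (0 : ℝ) < d := by exact_mod_cast hd
  set p : ℝ := d / 2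
  have hp : 0 < p := by positivity
  set A := 4 * π * C ^ p⁻¹
  have hA : 0 < A := by positivity
  have hnodes : Tendsto (fun n : ℕ => (lam n / A) ^ p / n) atTop (𝓝 1) := by
    have he : 2 / (d : ℝ) = p⁻¹ := (inv_div _ _).symm
    simpa only [inv_inv] using tendsto_rpow_inv_div_natCast hA (inv_pos.mpr hp) hlam0
      (hasymp.congr fun n => by rw [he, mul_rpow hC.le n.cast_nonneg, ← mul_assoc])
  -- `|t|` since `Real.rpow` is junk at negative bases; it makes this function compactly supported.
  have hf : Continuous fun t : ℝ => χ (A * |t| ^ p⁻¹) :=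
    hχc.comp <| continuous_const.mul <|
      (continuous_rpow_const (inv_pos.mpr hp).le).comp continuous_abs
  have hlim := (tendsto_tsum_comp_div_atTop_setIntegral_Ioi hf
    (hχs.comp_mul_abs_rpow hA (inv_pos.mpr hp)) hnodes).comp (tendsto_pow_atTop (by omega : d ≠ 0))
  have hAp : A ^ p = (4 * π) ^ p * C := by
    rw [mul_rpow (by positivity) (by positivity), rpow_inv_rpow hC.le hp.ne']
  have hconst : d / (2 * C * (4 * π) ^ p) * ∫ ω in Ioi 0, ω ^ (p - 1) * χ ω
      = ∫ t in Ioi 0, χ (A * |t| ^ p⁻¹) := by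
    rw [integral_comp_mul_abs_rpow_inv_Ioi χ hA hp, hAp]
    field_simp
    ring
  rw [hconst]
  refine hlim.congr' ?_
  filter_upwards [eventually_gt_atTop 0] with L hL
  have hdp : (d : ℝ) * p⁻¹ = 2 := by rw [inv_div, mul_div_cancel₀ _ hd₀.ne']
  simp only [Function.comp_apply, mul_abs_div_pow_rpow_inv hA hp hdp (hlam0 _) hL]

/-- Riemann-sum limit. For continuous `χ` compactly supported in `(0,∞)`
and `λ_n ~ 4π (C n)^{2/d}`, we have
`L^{-d} Σ_n χ(λ_n/L²) → (d/(2C(4π)^{d/2})) ∫_0^∞ ω^{d/2−1} χ(ω) dω` as `L → ∞`. -/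
theorem riemann_sum_limit (d : ℕ) (hd : 1 ≤ d) (C : ℝ) (hC : 0 < C)
    (χ : ℝ → ℝ) (hχc : Continuous χ) (hχs : HasCompactSupport χ)
    (hχsupp : tsupport χ ⊆ Set.Ioi (0 : ℝ))
    (lam : ℕ → ℝ) (hlam0 : ∀ n, 0 ≤ lam n) (hmono : Monotone lam)
    (hasymp : Tendsto (fun n : ℕ => lam n / (4 * π * (C * n) ^ (2 / (d : ℝ))))
      atTop (nhds 1)) :
    Tendsto (fun L : ℝ => (∑' n : ℕ, χ (lam n / L ^ 2)) / L ^ d)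
      atTop (nhds (((d : ℝ) / (2 * C * (4 * π) ^ ((d : ℝ) / 2))) *
        ∫ ω in Set.Ioi (0 : ℝ), ω ^ ((d : ℝ) / 2 - 1) * χ ω)) :=
  riemann_sum_limit_general d hd C hC χ hχc hχs lam hlam0 hasymp
end

section
/- (sinc² approximation of the Dirac delta) For every continuous compactly supported φ : ℝ → ℝ, one has (1/(2πt)) ∫_ℝ (sin(tΩ/2))²/(Ω/2)² φ(Ω) dΩ → φ(0) as t → ∞. -/
/-!
Substituting `Ω = 2s/t` turns the expression into `(1/π) ∫ sin² s / s² · φ(2s/t) ds`, which tends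
to `φ(0)` by dominated convergence once one knows `∫ sin² s / s² ds = π`. That integral is
computed by writing `1/x² = ∫₀^∞ u e^{-ux} du` and swapping the integrals: the Laplace transform of
`sin²` is `2/(u(u² + 4))`, which leaves an arctangent integral.
-/

open MeasureTheory Real Filter Set Topology

lemma sin_sq_div_sq_le (x : ℝ) : sin x ^ 2 / x ^ 2 ≤ 2 / (1 + x ^ 2) := by
  rcases eq_or_ne x 0 with rfl | _
  · norm_num
  rw [div_le_div_iff₀ (by positivity) (by positivity)]
  nlinarith [sin_sq_le_one x, sin_sq_le_sq (x := x), sq_nonneg x]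

lemma integrable_sin_sq_div_sq : Integrable (fun x : ℝ => sin x ^ 2 / x ^ 2) := by
  have h_meas : Measurable fun x : ℝ => sin x ^ 2 / x ^ 2 := by fun_prop
  refine (integrable_inv_one_add_sq.const_mul 2).mono' h_meas.aestronglyMeasurable
    (ae_of_all _ fun x => ?_)
  rw [norm_of_nonneg (by positivity), ← div_eq_mul_inv]
  exact sin_sq_div_sq_le x

lemma integral_mul_exp_neg_mul_Ioi {c : ℝ} (hc : 0 < c) :
    ∫ u in Ioi (0:ℝ), u * exp (-(c * u)) = 1 / c ^ 2 := by
  have h := integral_rpow_mul_exp_neg_mul_Ioi two_pos hc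
  norm_num at h
  simpa [div_pow] using h

lemma sin_sq_mul_exp_neg_eq_re (u x : ℝ) :
    sin x ^ 2 * exp (-(u * x)) =
      ((Complex.exp (-u * x) - Complex.exp ((-u + 2 * Complex.I) * x)) / 2).re := by
  rw [Complex.div_ofNat_re, Complex.sub_re, Complex.exp_re, Complex.exp_re]
  simp only [neg_mul, Complex.neg_re, Complex.mul_re, Complex.ofReal_re, Complex.ofReal_im,
    mul_zero, sub_zero, Complex.neg_im, Complex.mul_im, zero_mul, add_zero, neg_zero, cos_zero,
    mul_one, Complex.add_re, Complex.re_ofNat, Complex.I_re, Complex.im_ofNat, Complex.I_im,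
    sub_self, Complex.add_im, zero_add]
  rw [cos_two_mul, cos_sq']
  ring

lemma integrableOn_sin_sq_mul_exp_neg {u : ℝ} (hu : 0 < u) :
    IntegrableOn (fun x : ℝ => sin x ^ 2 * exp (-(u * x))) (Ioi 0) := by
  refine (exp_neg_integrableOn_Ioi 0 hu).mono' (by fun_prop) (ae_of_all _ fun x => ?_)
  rw [norm_of_nonneg (by positivity), neg_mul]
  exact mul_le_of_le_one_left (exp_nonneg _) (sin_sq_le_one x)

lemma integral_sin_sq_mul_exp_neg {u : ℝ} (hu : 0 < u) :
    ∫ x in Ioi (0:ℝ), sin x ^ 2 * exp (-(u * x)) = 2 / (u * (u ^ 2 + 4)) := by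
  have ha : ((-u : ℂ)).re < 0 := by simpa using hu
  have hb : ((-u + 2 * Complex.I : ℂ)).re < 0 := by simpa using hu
  have hint : IntegrableOn
      (fun x : ℝ => (Complex.exp (-u * x) - Complex.exp ((-u + 2 * Complex.I) * x)) / 2) (Ioi 0) :=
    ((integrableOn_exp_mul_complex_Ioi ha 0).sub (integrableOn_exp_mul_complex_Ioi hb 0)).div_const 2
  simp_rw [sin_sq_mul_exp_neg_eq_re, ← RCLike.re_to_complex]
  rw [integral_re hint, integral_div,
    integral_sub (integrableOn_exp_mul_complex_Ioi ha 0) (integrableOn_exp_mul_complex_Ioi hb 0),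
    integral_exp_mul_complex_Ioi ha, integral_exp_mul_complex_Ioi hb]
  simp [Complex.div_re, Complex.normSq]
  field_simp
  ring

lemma integral_sin_sq_div_sq_Ioi : ∫ x in Ioi (0:ℝ), sin x ^ 2 / x ^ 2 = π / 2 := by
  set μ := volume.restrict (Ioi (0:ℝ))
  -- `1 / x² = ∫₀^∞ 4v e^{-2vx} dv`; the factor 2 makes the other iterated integral `(1 + v²)⁻¹`.
  let f : ℝ → ℝ → ℝ := fun v x => 4 * v * (sin x ^ 2 * exp (-(2 * v * x)))
  have integral_f_dx : ∀ v ∈ Ioi (0:ℝ), ∫ x, f v x ∂μ = (1 + v ^ 2)⁻¹ := fun v (hv : 0 < v) => by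
    rw [integral_const_mul, integral_sin_sq_mul_exp_neg (by positivity)]
    field_simp
    ring
  have integral_f_dv : ∀ x ∈ Ioi (0:ℝ), ∫ v, f v x ∂μ = sin x ^ 2 / x ^ 2 :=
    fun x (hx : 0 < x) => by
    calc ∫ v, f v x ∂μ = 4 * sin x ^ 2 * ∫ v in Ioi 0, v * exp (-(2 * x * v)) ∂volume := by
          rw [← integral_const_mul]; congr 1 with v; simp only [f]; ring_nf
      _ = sin x ^ 2 / x ^ 2 := by
          rw [integral_mul_exp_neg_mul_Ioi (by positivity)]; field_simp; ring
  have hf : Integrable (Function.uncurry f) (μ.prod μ) := by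
    have hf_cont : Continuous (Function.uncurry f) := by fun_prop
    refine (integrable_prod_iff hf_cont.aestronglyMeasurable).2 ⟨?_, ?_⟩
    · filter_upwards [ae_restrict_mem measurableSet_Ioi] with v (hv : 0 < v)
      exact (integrableOn_sin_sq_mul_exp_neg (u := 2 * v) (by positivity)).const_mul (4 * v)
    · refine integrable_inv_one_add_sq.integrableOn.congr_fun (fun v (hv : 0 < v) => ?_)
        measurableSet_Ioi
      change (1 + v ^ 2)⁻¹ = _
      rw [← integral_f_dx v hv]
      refine setIntegral_congr_fun measurableSet_Ioi fun x (hx : 0 < x) => ?_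
      exact (norm_of_nonneg (by positivity)).symm
  calc ∫ x in Ioi 0, sin x ^ 2 / x ^ 2 = ∫ x, ∫ v, f v x ∂μ ∂μ :=
        (setIntegral_congr_fun measurableSet_Ioi integral_f_dv).symm
    _ = ∫ v, ∫ x, f v x ∂μ ∂μ := (integral_integral_swap hf).symm
    _ = ∫ v in Ioi 0, (1 + v ^ 2)⁻¹ := setIntegral_congr_fun measurableSet_Ioi integral_f_dx
    _ = π / 2 := by simp

lemma integral_sin_sq_div_sq : ∫ x : ℝ, sin x ^ 2 / x ^ 2 = π := by
  have h_even : ∀ x : ℝ, sin |x| ^ 2 / |x| ^ 2 = sin x ^ 2 / x ^ 2 := fun x => by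
    rcases abs_choice x with h | h <;> simp [h]
  calc ∫ x : ℝ, sin x ^ 2 / x ^ 2 = ∫ x : ℝ, sin |x| ^ 2 / |x| ^ 2 := by simp only [h_even]
    _ = π := by
      rw [integral_comp_abs (f := fun x => sin x ^ 2 / x ^ 2), integral_sin_sq_div_sq_Ioi]
      ring

lemma tendsto_integral_mul_comp_mul_nhds_zero {K φ : ℝ → ℝ} (hK : Integrable K)
    (hφ : Continuous φ) {C : ℝ} (hC : ∀ x, ‖φ x‖ ≤ C) :
    Tendsto (fun c => ∫ s, K s * φ (c * s)) (𝓝 0) (𝓝 ((∫ s, K s) * φ 0)) := by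
  rw [← integral_mul_const]
  refine tendsto_integral_filter_of_dominated_convergence (fun s => ‖K s‖ * C)
    (Eventually.of_forall fun c => hK.aestronglyMeasurable.mul (by fun_prop))
    (Eventually.of_forall fun c => ae_of_all _ fun s => ?_) (hK.norm.mul_const C)
    (ae_of_all _ fun s => ?_)
  · rw [norm_mul]
    exact mul_le_mul_of_nonneg_left (hC _) (norm_nonneg _)
  · exact tendsto_const_nhds.mul
      ((hφ.tendsto 0).comp ((continuous_mul_const s).tendsto' 0 0 (zero_mul s)))

lemma integral_sin_sq_div_half_sq_mul_eq {t : ℝ} (ht : 0 < t) (φ : ℝ → ℝ) :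
    ∫ Ω, sin (t * Ω / 2) ^ 2 / (Ω / 2) ^ 2 * φ Ω =
      2 * t * ∫ s, sin s ^ 2 / s ^ 2 * φ (2 / t * s) := by
  set g : ℝ → ℝ := fun s => sin s ^ 2 / s ^ 2 * φ (2 / t * s)
  have h_scale : ∀ Ω, sin (t * Ω / 2) ^ 2 / (Ω / 2) ^ 2 * φ Ω = t ^ 2 * g (t / 2 * Ω) :=
    fun Ω => by
    simp only [g]
    rw [show 2 / t * (t / 2 * Ω) = Ω by field_simp, show t / 2 * Ω = t * Ω / 2 by ring]
    field_simp
  simp_rw [h_scale]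
  rw [integral_const_mul, Measure.integral_comp_mul_left, inv_div, abs_of_pos (by positivity),
    smul_eq_mul]
  field_simp

/-- sinc² approximation of the Dirac delta: for every continuous compactly
supported `φ : ℝ → ℝ`,
`(1/(2πt)) ∫_ℝ sin(tΩ/2)²/(Ω/2)² φ(Ω) dΩ → φ(0)` as `t → ∞`. -/
theorem sinc_sq_delta (φ : ℝ → ℝ) (hφc : Continuous φ) (hφs : HasCompactSupport φ) :
    Tendsto (fun t : ℝ =>
        (1 / (2 * π * t)) * ∫ Ω : ℝ, (Real.sin (t * Ω / 2)) ^ 2 / (Ω / 2) ^ 2 * φ Ω)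
      atTop (nhds (φ 0)) := by
  obtain ⟨C, hC⟩ := hφs.exists_bound_of_continuous hφc
  have h_two_div : Tendsto (fun t : ℝ => 2 / t) atTop (𝓝 0) :=
    tendsto_const_nhds.div_atTop tendsto_id
  have h_lim := ((tendsto_integral_mul_comp_mul_nhds_zero integrable_sin_sq_div_sq hφc hC).comp
    h_two_div).div_const π
  rw [integral_sin_sq_div_sq, mul_div_cancel_left₀ _ pi_ne_zero] at h_lim
  refine h_lim.congr' ((eventually_gt_atTop 0).mono fun t (ht : 0 < t) => ?_)
  simp only [Function.comp_apply, integral_sin_sq_div_half_sq_mul_eq ht]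
  generalize ∫ s, sin s ^ 2 / s ^ 2 * φ (2 / t * s) = I
  field_simp
end
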